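/- arXiv:2301.00471 — 2 statements merged into one kernel-verified Lean document; each statement's English description precedes it below -/
import Mathlib

section
/- Let T > 0 and k ∈ ℕ. If every f₀ ∈ H^k(𝕋)^d (real-valued) can be steered to 0 in time T by some control u ∈ L²((0,T)×𝕋;ℝ^m) vanishing a.e. outside ω, then for every n ∈ ℤ the spectral Kalman rank condition rank [B_n|M] = d holds. -/
open MeasureTheory Real Set Matrix

noncomputable section

instance : Fact (0 < 2 * Real.pi) := ⟨by positivity⟩

/-- The one-dimensional torus `ℝ/(2πℤ)`. -/
abbrev Torus : Type := AddCircle (2 * Real.pi)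

/-- The `n`-th Fourier coefficient of a vector-valued function on the torus. -/
def fCoeff {ι : Type*} (f : Torus → ι → ℂ) (n : ℤ) : ι → ℂ :=
  fun i => fourierCoeff (fun x => f x i) n

/-- The `n`-th Fourier coefficient of a real vector-valued function on the torus. -/
def fCoeffR {ι : Type*} (f : Torus → ι → ℝ) (n : ℤ) : ι → ℂ :=
  fCoeff (fun x i => (f x i : ℂ)) n

/-- Membership in the Sobolev space `H^s` (square-summability of Fourier coefficients
with weight `(1+n²)^s`). -/
def memHs {ι : Type*} [Fintype ι] (s : ℝ) (f : Torus → ι → ℝ) : Prop :=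
  Summable fun n : ℤ => (1 + (n : ℝ) ^ 2) ^ s * ∑ i, ‖fCoeffR f n i‖ ^ 2

/-- The matrix `B_n := -n² B - i n A - K`. -/
def BnMat {ι : Type*} [Fintype ι] [DecidableEq ι] (B A K : Matrix ι ι ℝ) (n : ℤ) :
    Matrix ι ι ℂ :=
  (-(n : ℂ) ^ 2) • B.map Complex.ofReal - (Complex.I * (n : ℂ)) • A.map Complex.ofReal
    - K.map Complex.ofReal

/-- The `k`-block Kalman matrix `(M, BM, …, B^{k-1}M)`. -/
def kalman {ι : Type*} [Fintype ι] [DecidableEq ι] {m : ℕ} (B : Matrix ι ι ℂ)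
    (M : Matrix ι (Fin m) ℂ) (k : ℕ) : Matrix ι (Fin k × Fin m) ℂ :=
  Matrix.of fun i p => (B ^ (p.1 : ℕ) * M) i p.2

/-- `ℓ(ω)`: supremum of the lengths of the connected components of the complement of `ω`. -/
def ellOmega (ω : Set Torus) : ℝ :=
  sSup {L : ℝ | ∃ x ∈ ωᶜ, L = (volume (connectedComponentIn ωᶜ x)).toReal}

/-- `μ* := min { |μ| : μ ∈ Sp(A') }`. -/
def muStar {dh : ℕ} (A' : Matrix (Fin dh) (Fin dh) ℝ) : ℝ :=
  sInf ((fun z : ℂ => ‖z‖) '' spectrum ℂ (A'.map Complex.ofReal))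

/-- `A'` is diagonalizable over `ℂ` with only real eigenvalues. -/
def IsDiagRealSpec {dh : ℕ} (A' : Matrix (Fin dh) (Fin dh) ℝ) : Prop :=
  ∃ (P : Matrix (Fin dh) (Fin dh) ℂ) (μ : Fin dh → ℝ),
    IsUnit P.det ∧ A'.map Complex.ofReal = P * Matrix.diagonal (fun i => (μ i : ℂ)) * P⁻¹

/-- The control `u ∈ L²((0,T)×𝕋; ℝ^m)`, vanishing a.e. outside `ω`, steers the initial datum
`f₀` to `0` in time `T`, expressed frequency-by-frequency through Duhamel's formula. -/
def steers {ι : Type*} [Fintype ι] [DecidableEq ι] {m : ℕ}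
    (B A K : Matrix ι ι ℝ) (M : Matrix ι (Fin m) ℝ) (ω : Set Torus) (T : ℝ)
    (f₀ : Torus → ι → ℝ) (u : ℝ → Torus → Fin m → ℝ) : Prop :=
  MemLp (fun p : ℝ × Torus => u p.1 p.2) 2 ((volume.restrict (Set.Ioo 0 T)).prod volume) ∧
  (∀ᵐ p : ℝ × Torus ∂((volume.restrict (Set.Ioo 0 T)).prod volume),
      p.2 ∉ ω → u p.1 p.2 = 0) ∧
  ∀ n : ℤ,
    (NormedSpace.exp ((T : ℂ) • BnMat B A K n)).mulVec (fCoeffR f₀ n)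
      + ∫ t in (0 : ℝ)..T,
          (NormedSpace.exp (((T - t : ℝ) : ℂ) • BnMat B A K n)).mulVec
            ((M.map Complex.ofReal).mulVec (fCoeffR (u t) n)) = 0

/-!
If `rank [B_n|M] < d`, some `φ ≠ 0` satisfies `φᵀ B_nʲ M = 0` for `j < d`, hence for every `j`
by Cayley–Hamilton, hence `φᵀ exp(s B_n) M = 0` for every `s`. Pairing Duhamel's formula at
frequency `n` with `φ` therefore kills the control term: every datum that can be steered to `0`
satisfies `φᵀ exp(T B_n) c_n(f₀) = 0`. As `exp(T B_n)` is invertible, `φᵀ exp(T B_n)` has a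
nonzero entry `i`, and the smooth real datum `f₀(x) = cos(n x) eᵢ` violates this relation.
-/

open NormedSpace

namespace Matrix

variable {n ι : Type*} [Fintype n]

theorem exists_vecMul_eq_zero_of_rank_lt [Fintype ι] {K : Type*} [Field K] (A : Matrix n ι K)
    (h : A.rank < Fintype.card n) : ∃ φ : n → K, φ ≠ 0 ∧ φ ᵥ* A = 0 := by
  have hker : LinearMap.ker Aᵀ.mulVecLin.rangeRestrict ≠ ⊥ :=
    LinearMap.ker_ne_bot_of_finrank_lt <| by
      rwa [Module.finrank_fintype_fun_eq_card, ← rank, rank_transpose]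
  obtain ⟨φ, hφ, hφ0⟩ := Submodule.exists_mem_ne_zero_of_ne_bot hker
  rw [LinearMap.ker_rangeRestrict, LinearMap.mem_ker, mulVecLin_apply, mulVec_transpose] at hφ
  exact ⟨φ, hφ0, hφ⟩

variable [DecidableEq n]

theorem vecMul_pow_mul_eq_zero {R : Type*} [CommRing R] [Nontrivial R] (B : Matrix n n R)
    (M : Matrix n ι R) (φ : n → R) (h : ∀ j < Fintype.card n, φ ᵥ* (B ^ j * M) = 0) (j : ℕ) :
    φ ᵥ* (B ^ j * M) = 0 := by
  rcases isEmpty_or_nonempty n with hn | hn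
  · rw [Subsingleton.elim φ 0, zero_vecMul]
  have hχ : B.charpoly ≠ 1 := fun h1 => (Fintype.card_ne_zero (α := n)) <| by
    simpa [h1] using B.charpoly_natDegree_eq_dim.symm
  have hdeg : (Polynomial.X ^ j %ₘ B.charpoly).natDegree < Fintype.card n :=
    (Polynomial.natDegree_modByMonic_lt _ B.charpoly_monic hχ).trans_eq
      B.charpoly_natDegree_eq_dim
  rw [pow_eq_aeval_mod_charpoly, Polynomial.aeval_eq_sum_range' hdeg, Matrix.sum_mul,
    vecMul_sum]
  refine Finset.sum_eq_zero fun i hi => ?_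
  rw [smul_mul, vecMul_smul, h i (Finset.mem_range.1 hi), smul_zero]

open scoped Norms.Operator in
theorem vecMul_exp_mul_eq_zero {𝕂 : Type*} [RCLike 𝕂] (X : Matrix n n 𝕂) (M : Matrix n ι 𝕂)
    (φ : n → 𝕂) (h : ∀ j : ℕ, φ ᵥ* (X ^ j * M) = 0) : φ ᵥ* (exp X * M) = 0 := by
  let L : Matrix n n 𝕂 →+ (ι → 𝕂) :=
    { toFun := fun Y => φ ᵥ* (Y * M)
      map_zero' := by simp
      map_add' := fun Y Z => by simp only [Matrix.add_mul, vecMul_add] }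
  have hL : Continuous L :=
    continuous_const.matrix_vecMul (continuous_id.matrix_mul continuous_const)
  refine ((exp_series_hasSum_exp' (𝕂 := 𝕂) X).map L hL).unique ?_
  convert hasSum_zero with j
  show φ ᵥ* (((j.factorial : 𝕂)⁻¹ • X ^ j) * M) = 0
  rw [smul_mul, vecMul_smul, h j, smul_zero]

end Matrix

theorem vecMul_kalman_apply {ι : Type*} [Fintype ι] [DecidableEq ι] {m : ℕ} (B : Matrix ι ι ℂ)
    (M : Matrix ι (Fin m) ℂ) (k : ℕ) (φ : ι → ℂ) (j : Fin k) (p : Fin m) :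
    (φ ᵥ* kalman B M k) (j, p) = (φ ᵥ* (B ^ (j : ℕ) * M)) p :=
  rfl

theorem exists_vecMul_exp_smul_mul_eq_zero_of_rank_kalman_ne {d m : ℕ}
    (B : Matrix (Fin d) (Fin d) ℂ) (M : Matrix (Fin d) (Fin m) ℂ) (h : (kalman B M d).rank ≠ d) :
    ∃ φ : Fin d → ℂ, φ ≠ 0 ∧ ∀ s : ℂ, φ ᵥ* (exp (s • B) * M) = 0 := by
  have hlt : (kalman B M d).rank < Fintype.card (Fin d) :=
    (rank_le_card_height _).lt_of_ne (by rwa [Fintype.card_fin])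
  obtain ⟨φ, hφ, hφK⟩ := (kalman B M d).exists_vecMul_eq_zero_of_rank_lt hlt
  have hpow : ∀ j, φ ᵥ* (B ^ j * M) = 0 :=
    B.vecMul_pow_mul_eq_zero M φ fun j (hj : j < Fintype.card (Fin d)) => funext fun p => by
      simpa only [vecMul_kalman_apply, Pi.zero_apply] using
        congrFun hφK (⟨j, by simpa using hj⟩, p)
  refine ⟨φ, hφ, fun s => Matrix.vecMul_exp_mul_eq_zero _ M φ fun j => ?_⟩
  rw [smul_pow, smul_mul, vecMul_smul, hpow, smul_zero]

section CosineMode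

variable {ι : Type*}

theorem fourierCoeff_re_fourier (n q : ℤ) :
    fourierCoeff (fun x : Torus => ((fourier n x).re : ℂ)) q =
      2⁻¹ * ((Pi.single n 1 : ℤ → ℂ) q + (Pi.single (-n) 1 : ℤ → ℂ) q) := by
  have hre : (fun x : Torus => ((fourier n x).re : ℂ)) =
      fun x => 2⁻¹ * ((⇑(fourier n) + ⇑(fourier (-n)) : Torus → ℂ) x) := by
    funext x
    rw [Pi.add_apply, fourier_neg, Complex.add_conj]
    push_cast
    ring
  have hint : ∀ k : ℤ, Integrable (fourier k) (AddCircle.haarAddCircle (T := 2 * π)) :=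
    fun k => (fourier k).continuous.integrable_of_hasCompactSupport
      (HasCompactSupport.of_compactSpace _)
  rw [hre, fourierCoeff.const_mul, fourierCoeff.add (hint n) (hint (-n)), Pi.add_apply,
    fourierCoeff_fourier, fourierCoeff_fourier]

theorem fourierCoeff_re_fourier_self_ne_zero (n : ℤ) :
    fourierCoeff (fun x : Torus => ((fourier n x).re : ℂ)) n ≠ 0 := by
  rw [fourierCoeff_re_fourier, Pi.single_eq_same, Pi.single_apply]
  split_ifs <;> norm_num

def cosMode (n : ℤ) (v : ι → ℝ) : Torus → ι → ℝ :=
  fun x => (fourier n x).re • v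

theorem continuous_cosMode (n : ℤ) (v : ι → ℝ) : Continuous (cosMode n v) :=
  (Complex.continuous_re.comp (fourier n).continuous).smul continuous_const

theorem memLp_cosMode [Fintype ι] (n : ℤ) (v : ι → ℝ) (p : ENNReal) :
    MemLp (cosMode n v) p volume :=
  ((continuous_cosMode n v).memLp_top_of_hasCompactSupport
    (HasCompactSupport.of_compactSpace _) volume).mono_exponent le_top

theorem fCoeffR_cosMode (n q : ℤ) (v : ι → ℝ) :
    fCoeffR (cosMode n v) q =
      fourierCoeff (fun x : Torus => ((fourier n x).re : ℂ)) q • fun j => (v j : ℂ) := by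
  funext j
  simp only [fCoeffR, fCoeff, cosMode, Pi.smul_apply, smul_eq_mul, Complex.ofReal_mul]
  simp_rw [mul_comm _ (v j : ℂ)]
  exact fourierCoeff.const_mul _ _ _

theorem memHs_of_fCoeffR_eq_zero [Fintype ι] (s : ℝ) (f : Torus → ι → ℝ) (S : Finset ℤ)
    (h : ∀ q ∉ S, fCoeffR f q = 0) : memHs s f :=
  summable_of_ne_finset_zero (s := S) fun q hq => by simp [h q hq]

theorem memHs_cosMode [Fintype ι] (s : ℝ) (n : ℤ) (v : ι → ℝ) : memHs s (cosMode n v) := by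
  refine memHs_of_fCoeffR_eq_zero s _ {n, -n} fun q hq => ?_
  simp only [Finset.mem_insert, Finset.mem_singleton, not_or] at hq
  rw [fCoeffR_cosMode, fourierCoeff_re_fourier, Pi.single_eq_of_ne hq.1,
    Pi.single_eq_of_ne hq.2, add_zero, mul_zero, zero_smul]

end CosineMode

theorem ContinuousLinearMap.map_intervalIntegral_eq_zero {𝕜 E F : Type*} [RCLike 𝕜]
    [NormedAddCommGroup E] [NormedSpace 𝕜 E] [NormedSpace ℝ E] [CompleteSpace E]
    [NormedAddCommGroup F] [NormedSpace 𝕜 F] [NormedSpace ℝ F] [CompleteSpace F] (L : E →L[𝕜] F)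
    {f : ℝ → E} {a b : ℝ} (h : ∀ t, L (f t) = 0) : L (∫ t in a..b, f t) = 0 := by
  by_cases hf : IntervalIntegrable f volume a b
  · simp [← L.intervalIntegral_comp_comm hf, h]
  · rw [intervalIntegral.integral_undef hf, map_zero]

theorem steers.vecMul_exp_dotProduct_fCoeffR_eq_zero {ι : Type*} [Fintype ι] [DecidableEq ι]
    {m : ℕ} {B A K : Matrix ι ι ℝ} {M : Matrix ι (Fin m) ℝ} {ω : Set Torus} {T : ℝ}
    {f₀ : Torus → ι → ℝ} {u : ℝ → Torus → Fin m → ℝ} (hu : steers B A K M ω T f₀ u) (n : ℤ)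
    (φ : ι → ℂ) (hφ : ∀ s : ℂ, φ ᵥ* (exp (s • BnMat B A K n) * M.map Complex.ofReal) = 0) :
    φ ᵥ* exp ((T : ℂ) • BnMat B A K n) ⬝ᵥ fCoeffR f₀ n = 0 := by
  have hduh := congrArg (dotProductBilin ℂ ℂ φ).toContinuousLinearMap (hu.2.2 n)
  rw [map_add, map_zero, ContinuousLinearMap.map_intervalIntegral_eq_zero _ fun t => ?_,
    add_zero] at hduh
  · simpa [dotProduct_mulVec] using hduh
  · simp [dotProduct_mulVec, hφ]

theorem statement1_general
    (d m : ℕ)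
    (B A K : Matrix (Fin d) (Fin d) ℝ) (M : Matrix (Fin d) (Fin m) ℝ)
    (ω : Set Torus)
    (T : ℝ) (k : ℕ)
    (hcontrol : ∀ f₀ : Torus → Fin d → ℝ, MemLp f₀ 2 volume → memHs (k : ℝ) f₀ →
      ∃ u : ℝ → Torus → Fin m → ℝ, steers B A K M ω T f₀ u) :
    ∀ n : ℤ, (kalman (BnMat B A K n) (M.map Complex.ofReal) d).rank = d := by
  intro n
  by_contra hrank
  obtain ⟨φ, hφ, hφM⟩ := exists_vecMul_exp_smul_mul_eq_zero_of_rank_kalman_ne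
    (BnMat B A K n) (M.map Complex.ofReal) hrank
  have hψ : φ ᵥ* exp ((T : ℂ) • BnMat B A K n) ≠ 0 := by
    have h := (vecMul_injective_iff_isUnit.2 (isUnit_exp ((T : ℂ) • BnMat B A K n))).ne hφ
    rwa [zero_vecMul] at h
  obtain ⟨i, hi⟩ := Function.ne_iff.1 hψ
  obtain ⟨u, hu⟩ := hcontrol (cosMode n (Pi.single i 1)) (memLp_cosMode n _ 2) (memHs_cosMode _ n _)
  have h := hu.vecMul_exp_dotProduct_fCoeffR_eq_zero n φ hφM
  rw [fCoeffR_cosMode, dotProduct_smul, smul_eq_mul] at h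
  refine (mul_eq_zero.1 h).elim (fourierCoeff_re_fourier_self_ne_zero n) fun h' => hi ?_
  simpa [Pi.single_apply, dotProduct, apply_ite Complex.ofReal] using h'

/-- If every initial datum in `H^k(𝕋)^d` can be steered to `0` in time `T`,
then the spectral Kalman rank condition `rank [B_n|M] = d` holds for every `n ∈ ℤ`. -/
theorem statement1
    (d m : ℕ) (hd : 2 ≤ d) (hm : 1 ≤ m) (hmd : m ≤ d)
    (B A K : Matrix (Fin d) (Fin d) ℝ) (M : Matrix (Fin d) (Fin m) ℝ)
    (ω : Set Torus) (hω : IsOpen ω) (hωne : ω.Nonempty)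
    (T : ℝ) (hT : 0 < T) (k : ℕ)
    (hcontrol : ∀ f₀ : Torus → Fin d → ℝ, MemLp f₀ 2 volume → memHs (k : ℝ) f₀ →
      ∃ u : ℝ → Torus → Fin m → ℝ, steers B A K M ω T f₀ u) :
    ∀ n : ℤ, (kalman (BnMat B A K n) (M.map Complex.ofReal) d).rank = d :=
  statement1_general d m B A K M ω T k hcontrol
end
end

section
/- Let B ∈ M_d(ℂ), M ∈ M_{d,m}(ℂ), ℓ ∈ ℕ, and let w : ℝ → ℂ^m be of class C^ℓ. Define Y(t) := Σ_{j=0}^{ℓ−1} B^{ℓ−1−j}·M·w^{(j)}(t) (so Y ≡ 0 when ℓ = 0). Then for every t ∈ ℝ: Y'(t) − B·Y(t) = M·w^{(ℓ)}(t) − B^ℓ·M·w(t). -/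
open MeasureTheory Real Set Matrix

noncomputable section

/-! Differentiating `Y` termwise raises each `w^{(j)}` to `w^{(j+1)}`, while multiplying `Y` by `B`
raises each power `B^{ℓ-1-j}` to `B^{ℓ-j}`; the difference of the two sums telescopes. -/

theorem Matrix.sum_range_pow_mul_mulVec_succ {R n o : Type*} [Ring R] [Fintype n] [Fintype o]
    [DecidableEq n] (B : Matrix n n R) (M : Matrix n o R) (v : ℕ → o → R)
    (ℓ : ℕ) :
    ∑ j ∈ Finset.range ℓ, (B ^ (ℓ - 1 - j) * M) *ᵥ v (j + 1)
      = B *ᵥ ∑ j ∈ Finset.range ℓ, (B ^ (ℓ - 1 - j) * M) *ᵥ v j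
        + (M *ᵥ v ℓ - (B ^ ℓ * M) *ᵥ v 0) := by
  set f : ℕ → n → R := fun j => (B ^ (ℓ - j) * M) *ᵥ v j
  have hshift : ∀ j ∈ Finset.range ℓ, (B ^ (ℓ - 1 - j) * M) *ᵥ v (j + 1) = f (j + 1) := by
    intro j _
    rw [Nat.sub_right_comm, Nat.sub_sub]
  have hmul : B *ᵥ ∑ j ∈ Finset.range ℓ, (B ^ (ℓ - 1 - j) * M) *ᵥ v j
      = ∑ j ∈ Finset.range ℓ, f j := by
    rw [Matrix.mulVec_sum]
    refine Finset.sum_congr rfl fun j hj => ?_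
    have hexp : ℓ - j = ℓ - 1 - j + 1 := by have := Finset.mem_range.mp hj; omega
    simp only [f, Matrix.mulVec_mulVec, ← Matrix.mul_assoc, ← pow_succ', hexp]
  have hf_last : f ℓ = M *ᵥ v ℓ := by simp [f]
  have hf_zero : f 0 = (B ^ ℓ * M) *ᵥ v 0 := by simp [f]
  rw [Finset.sum_congr rfl hshift, hmul, ← hf_last, ← hf_zero, ← Finset.sum_range_sub,
    Finset.sum_sub_distrib, add_sub_cancel]

theorem HasDerivAt.matrix_mulVec {𝕜 𝔸 n o : Type*} [NontriviallyNormedField 𝕜] [NormedRing 𝔸]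
    [NormedAlgebra 𝕜 𝔸] [Fintype o] {f : 𝕜 → o → 𝔸} {f' : o → 𝔸} {x : 𝕜}
    (hf : HasDerivAt f f' x) (A : Matrix n o 𝔸) :
    HasDerivAt (fun y => A *ᵥ f y) (A *ᵥ f') x :=
  hasDerivAt_pi.mpr fun i =>
    HasDerivAt.fun_sum fun j _ => (hasDerivAt_pi.mp hf j).const_mul (A i j)

theorem ContDiff.hasDerivAt_iteratedDeriv {𝕜 F : Type*} [NontriviallyNormedField 𝕜]
    [NormedAddCommGroup F] [NormedSpace 𝕜 F] {f : 𝕜 → F} {N : WithTop ℕ∞} {j : ℕ}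
    (hf : ContDiff 𝕜 N f) (hj : j < N) (x : 𝕜) :
    HasDerivAt (iteratedDeriv j f) (iteratedDeriv (j + 1) f x) x := by
  rw [iteratedDeriv_succ]
  exact (hf.differentiable_iteratedDeriv j hj x).hasDerivAt

/-- Telescoping identity: with `Y = Σ_{j<ℓ} B^{ℓ-1-j} M w^{(j)}`, one has
`Y' - BY = M w^{(ℓ)} - B^ℓ M w`. -/
theorem statement8
    (d m ℓ : ℕ) (B : Matrix (Fin d) (Fin d) ℂ) (M : Matrix (Fin d) (Fin m) ℂ)
    (w : ℝ → Fin m → ℂ) (hw : ContDiff ℝ (ℓ : ℕ∞) w) (t : ℝ) :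
    HasDerivAt
      (fun s => ∑ j ∈ Finset.range ℓ, (B ^ (ℓ - 1 - j) * M).mulVec (iteratedDeriv j w s))
      (B.mulVec (∑ j ∈ Finset.range ℓ, (B ^ (ℓ - 1 - j) * M).mulVec (iteratedDeriv j w t))
        + (M.mulVec (iteratedDeriv ℓ w t) - (B ^ ℓ * M).mulVec (w t))) t := by
  have hY : HasDerivAt
      (fun s => ∑ j ∈ Finset.range ℓ, (B ^ (ℓ - 1 - j) * M) *ᵥ iteratedDeriv j w s)
      (∑ j ∈ Finset.range ℓ, (B ^ (ℓ - 1 - j) * M) *ᵥ iteratedDeriv (j + 1) w t) t :=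
    HasDerivAt.fun_sum fun j hj =>
      (hw.hasDerivAt_iteratedDeriv (by exact_mod_cast Finset.mem_range.mp hj) t).matrix_mulVec _
  simpa only [Matrix.sum_range_pow_mul_mulVec_succ B M (fun j => iteratedDeriv j w t),
    iteratedDeriv_zero] using hY
end
end
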